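/- arXiv:2304.04288 — 3 statements merged into one kernel-verified Lean document; each statement's English description precedes it below -/
import Mathlib

section
/- Let n ≥ 3 and let Dic_{4n} = ⟨a, x : a^{2n} = e, x² = aⁿ, ax = xa⁻¹⟩ be the dicyclic group of order 4n. Then the enhanced power graph of Dic_{4n} has exactly two dominating vertices, namely e and aⁿ. -/
/-! Since `⟨a^k⟩` consists of powers of `a`, a cyclic subgroup containing some `x a^i` is
generated by some `x a^k`, and then it is `{e, aⁿ, x a^k, x a^{k-n}}`. Hence `a^i` with
`i ∉ {0, n}` is not adjacent to `x`, and `x a^i` is adjacent to no `x a^j` except `x a^{i+n}`,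
so not to `x a^{i+1}` once `n ≥ 2`. Conversely `e` lies in every cyclic subgroup, and `aⁿ` lies
in `⟨a⟩` and is the square of every `x a^j`. -/

open Polynomial

/-- The enhanced power graph of a group `G`: distinct `a`, `b` are adjacent iff
they lie in a common cyclic subgroup. -/
def enhancedPowerGraph (G : Type*) [Group G] : SimpleGraph G where
  Adj a b := a ≠ b ∧ ∃ c : G, a ∈ Subgroup.zpowers c ∧ b ∈ Subgroup.zpowers c
  symm := by constructor; rintro a b ⟨h, c, ha, hb⟩; exact ⟨h.symm, c, hb, ha⟩
  loopless := by constructor; rintro a ⟨h, _⟩; exact h rfl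

/-- The power graph of a group `G`: distinct `a`, `b` are adjacent iff
one is a power of the other. -/
def powerGraph (G : Type*) [Group G] : SimpleGraph G where
  Adj a b := a ≠ b ∧ (a ∈ Subgroup.zpowers b ∨ b ∈ Subgroup.zpowers a)
  symm := by constructor; rintro a b ⟨h, hc⟩; exact ⟨h.symm, hc.symm⟩
  loopless := by constructor; rintro a ⟨h, _⟩; exact h rfl

/-- The distance matrix of a graph, with real entries. -/
noncomputable def distMatrix {V : Type*} (Γ : SimpleGraph V) : Matrix V V ℝ :=
  fun u v => (Γ.dist u v : ℝ)

/-- The elementary abelian group `El(p^n) = (ℤ/p)^n`, written multiplicatively. -/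
abbrev El (p n : ℕ) : Type := Multiplicative (Fin n → ZMod p)

lemma enhancedPowerGraph_one_adj {G : Type*} [Group G] {g : G} (hg : 1 ≠ g) :
    (enhancedPowerGraph G).Adj 1 g :=
  ⟨hg, g, one_mem _, Subgroup.mem_zpowers g⟩

lemma ZMod.one_ne_natCast {m k : ℕ} (hk : 1 < k) (hkm : k < m) : (1 : ZMod m) ≠ k := by
  rw [← Nat.cast_one, Ne, ZMod.natCast_eq_natCast_iff', Nat.mod_eq_of_lt (by omega),
    Nat.mod_eq_of_lt hkm]
  omega

lemma ZMod.natCast_add_natCast_self (n : ℕ) : (n + n : ZMod (2 * n)) = 0 := by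
  simpa [two_mul] using ZMod.natCast_self (2 * n)

namespace QuaternionGroup

variable {n : ℕ}

lemma a_zpow (k : ZMod (2 * n)) (m : ℤ) :
    (a k : QuaternionGroup n) ^ m = a ((m : ZMod (2 * n)) * k) := by
  induction m using Int.induction_on with
  | zero => simp
  | succ m ih => rw [zpow_add_one, ih, a_mul_a]; push_cast; ring_nf
  | pred m ih =>
    rw [zpow_sub_one, ih, show (a k)⁻¹ = a (-k) from rfl, a_mul_a]; push_cast; ring_nf

lemma a_mem_zpowers_a_one (j : ZMod (2 * n)) :
    a j ∈ Subgroup.zpowers (a 1 : QuaternionGroup n) :=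
  ⟨ZMod.cast j, by simp [a_zpow]⟩

lemma xa_notMem_zpowers_a (i k : ZMod (2 * n)) :
    xa i ∉ Subgroup.zpowers (a k : QuaternionGroup n) := by
  rintro ⟨m, hm⟩
  simp only [a_zpow] at hm
  cases hm

lemma exists_eq_xa_of_xa_mem_zpowers {i : ZMod (2 * n)} {c : QuaternionGroup n}
    (h : xa i ∈ Subgroup.zpowers c) : ∃ k, c = xa k := by
  cases c with
  | a k => exact absurd h (xa_notMem_zpowers_a i k)
  | xa k => exact ⟨k, rfl⟩

lemma mem_zpowers_xa {k : ZMod (2 * n)} {y : QuaternionGroup n}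
    (hy : y ∈ Subgroup.zpowers (xa k)) :
    y = 1 ∨ y = a n ∨ y = xa k ∨ y = xa (k - (n : ZMod (2 * n))) := by
  obtain ⟨m, rfl⟩ := hy
  dsimp only
  rw [zpow_eq_zpow_emod' m (xa_pow_four k)]
  have h0 : 0 ≤ m % 4 := Int.emod_nonneg _ (by norm_num)
  have h4 : m % 4 < 4 := Int.emod_lt_of_pos _ (by norm_num)
  interval_cases m % 4 <;> simp [pow_succ]

lemma eq_zero_or_eq_natCast_of_adj_a_xa {i j : ZMod (2 * n)}
    (h : (enhancedPowerGraph (QuaternionGroup n)).Adj (a i) (xa j)) : i = 0 ∨ i = n := by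
  obtain ⟨-, c, hi, hj⟩ := h
  obtain ⟨k, rfl⟩ := exists_eq_xa_of_xa_mem_zpowers hj
  rcases mem_zpowers_xa hi with h | h | h | h <;>
    simp only [one_def, a.injEq, reduceCtorEq] at h <;> tauto

lemma eq_or_eq_sub_natCast_of_xa_mem_zpowers {i k : ZMod (2 * n)}
    (h : xa i ∈ Subgroup.zpowers (xa k)) : i = k ∨ i = k - n := by
  rcases mem_zpowers_xa h with h | h | h | h <;>
    simp only [one_def, xa.injEq, reduceCtorEq] at h <;> tauto

lemma eq_add_natCast_of_adj_xa_xa {i j : ZMod (2 * n)}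
    (h : (enhancedPowerGraph (QuaternionGroup n)).Adj (xa i) (xa j)) : j = i + n := by
  obtain ⟨hij, c, hi, hj⟩ := h
  obtain ⟨k, rfl⟩ := exists_eq_xa_of_xa_mem_zpowers hj
  rcases eq_or_eq_sub_natCast_of_xa_mem_zpowers hi with rfl | rfl <;>
    rcases eq_or_eq_sub_natCast_of_xa_mem_zpowers hj with rfl | rfl
  · exact absurd rfl hij
  · linear_combination -ZMod.natCast_add_natCast_self n
  · ring
  · exact absurd rfl hij

lemma a_natCast_adj {g : QuaternionGroup n} (hg : g ≠ a n) :
    (enhancedPowerGraph (QuaternionGroup n)).Adj (a n) g := by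
  refine ⟨hg.symm, ?_⟩
  cases g with
  | a j => exact ⟨a 1, a_mem_zpowers_a_one n, a_mem_zpowers_a_one j⟩
  | xa j => exact ⟨xa j, ⟨2, by simp [xa_sq]⟩, Subgroup.mem_zpowers _⟩

end QuaternionGroup

theorem stmt7 (n : ℕ) (hn : 3 ≤ n) (g : QuaternionGroup n) :
    (∀ h : QuaternionGroup n, h ≠ g → (enhancedPowerGraph (QuaternionGroup n)).Adj g h)
      ↔ (g = 1 ∨ g = QuaternionGroup.a (n : ZMod (2 * n))) := by
  have : Fact (1 < 2 * n) := ⟨by omega⟩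
  have hn1 : (1 : ZMod (2 * n)) ≠ n := ZMod.one_ne_natCast (by omega) (by omega)
  constructor
  · intro hdom
    cases g with
    | a i =>
      rcases QuaternionGroup.eq_zero_or_eq_natCast_of_adj_a_xa (hdom (.xa 0) (by simp))
        with rfl | rfl
      · exact Or.inl QuaternionGroup.a_zero
      · exact Or.inr rfl
    | xa i =>
      have hne : QuaternionGroup.xa (i + 1) ≠ .xa i := by simp
      have hi := QuaternionGroup.eq_add_natCast_of_adj_xa_xa (hdom _ hne)
      exact absurd (add_left_cancel hi) hn1
  · rintro (rfl | rfl) h hne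
    · exact enhancedPowerGraph_one_adj hne.symm
    · exact QuaternionGroup.a_natCast_adj hne
end

section
/- Let p, q be distinct primes and G = El(p^n) × El(q^m). In the enhanced power graph of G, every element of the form (a, e) with a ≠ e is adjacent to every element of the form (e, b) with b ≠ e; moreover the only edges of the enhanced power graph that are not edges of the power graph of G are those between such pairs (a, e) and (e, b). -/
open Polynomial

/-! Since the coordinates of `y ∈ G × H` have coprime orders, Bézout makes `(y.1, 1)` and
`(1, y.2)` powers of `y`, so `x ∈ zpowers y` as soon as each coordinate of `x` is a power of the
corresponding coordinate of `y`. In a group of prime exponent, every nontrivial element of a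
cyclic subgroup generates it. Hence for `u, v ∈ zpowers c` the element `v` is a power of `u`
unless some coordinate of `u` is trivial where that of `v` is not; if this fails in both
directions, `u` and `v` are nontrivial in different coordinates only. -/

open Subgroup

section

variable {G H : Type*} [Group G] [Group H]

lemma exists_zpow_eq_self_and_zpow_eq_one {g : G} {h : H}
    (hgh : (orderOf g).Coprime (orderOf h)) : ∃ k : ℤ, g ^ k = g ∧ h ^ k = 1 := by
  obtain ⟨x, y, hxy⟩ := Nat.isCoprime_iff_coprime.mpr hgh
  refine ⟨y * orderOf h, ?_, by rw [zpow_mul', zpow_natCast, pow_orderOf_eq_one, one_zpow]⟩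
  calc g ^ (y * orderOf h) = g ^ (1 - x * orderOf g : ℤ) := by rw [← hxy, add_sub_cancel_left]
    _ = g := by rw [zpow_sub, zpow_mul', zpow_natCast, pow_orderOf_eq_one, one_zpow, inv_one,
      mul_one, zpow_one]

lemma Prod.mk_one_mem_zpowers {g : G} {h : H} (hgh : (orderOf g).Coprime (orderOf h)) :
    ((g, 1) : G × H) ∈ zpowers (g, h) := by
  obtain ⟨k, hg, hh⟩ := exists_zpow_eq_self_and_zpow_eq_one hgh
  exact ⟨k, Prod.ext hg hh⟩

lemma Prod.one_mk_mem_zpowers {g : G} {h : H} (hgh : (orderOf g).Coprime (orderOf h)) :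
    ((1, h) : G × H) ∈ zpowers (g, h) := by
  obtain ⟨k, hh, hg⟩ := exists_zpow_eq_self_and_zpow_eq_one hgh.symm
  exact ⟨k, Prod.ext hg hh⟩

lemma Prod.fst_mem_zpowers {x y : G × H} (h : x ∈ zpowers y) : x.1 ∈ zpowers y.1 := by
  obtain ⟨k, rfl⟩ := h
  exact ⟨k, rfl⟩

lemma Prod.snd_mem_zpowers {x y : G × H} (h : x ∈ zpowers y) : x.2 ∈ zpowers y.2 := by
  obtain ⟨k, rfl⟩ := h
  exact ⟨k, rfl⟩

lemma Prod.mem_zpowers_of_coprime {x y : G × H} (hy : (orderOf y.1).Coprime (orderOf y.2))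
    (h₁ : x.1 ∈ zpowers y.1) (h₂ : x.2 ∈ zpowers y.2) : x ∈ zpowers y := by
  obtain ⟨i, hi⟩ := mem_zpowers_iff.mp h₁
  obtain ⟨j, hj⟩ := mem_zpowers_iff.mp h₂
  have hx : x = (y.1, 1) ^ i * (1, y.2) ^ j := by ext <;> simp [hi, hj]
  rw [hx]
  exact mul_mem (zpow_mem (Prod.mk_one_mem_zpowers hy) i)
    (zpow_mem (Prod.one_mk_mem_zpowers hy) j)

lemma mem_zpowers_of_mem_zpowers_of_pow_prime_eq_one {p : ℕ} (hp : p.Prime) {a b c : G}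
    (hc : c ^ p = 1) (ha : a ∈ zpowers c) (hb : b ∈ zpowers c) (ha₁ : a ≠ 1) :
    b ∈ zpowers a := by
  have := Fact.mk hp
  obtain ⟨k, rfl⟩ := mem_zpowers_iff.mp ha
  have hc₁ : c ≠ 1 := by rintro rfl; exact ha₁ (one_zpow k)
  have hk : ¬ (orderOf c : ℤ) ∣ k := fun h => ha₁ (orderOf_dvd_iff_zpow_eq_one.mp h)
  have hgen : c ∈ zpowers (c ^ k) := by
    rw [mem_zpowers_zpow_iff]
    rw [orderOf_eq_prime hc hc₁] at hk ⊢
    exact Nat.coprime_comm.mp (hp.coprime_iff_not_dvd.mpr (by rwa [Int.natCast_dvd] at hk))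
  exact zpowers_le.mpr hgen hb

end

namespace El

variable {p q n m : ℕ}

lemma pow_eq_one (a : El p n) : a ^ p = 1 := by
  ext i
  simp

lemma coprime_orderOf (hpq : p.Coprime q) (a : El p n) (b : El q m) :
    (orderOf a).Coprime (orderOf b) :=
  (hpq.coprime_dvd_left (orderOf_dvd_of_pow_eq_one a.pow_eq_one)).coprime_dvd_right
    (orderOf_dvd_of_pow_eq_one b.pow_eq_one)

lemma mem_zpowers_of_mem_zpowers (hp : p.Prime) (hq : q.Prime) (hpq : p ≠ q)
    {c u v : El p n × El q m} (hu : u ∈ zpowers c) (hv : v ∈ zpowers c)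
    (h₁ : u.1 ≠ 1 ∨ v.1 = 1) (h₂ : u.2 ≠ 1 ∨ v.2 = 1) : v ∈ zpowers u := by
  refine Prod.mem_zpowers_of_coprime
    (coprime_orderOf ((Nat.coprime_primes hp hq).mpr hpq) _ _) ?_ ?_
  · rcases h₁ with h | h
    · exact mem_zpowers_of_mem_zpowers_of_pow_prime_eq_one hp c.1.pow_eq_one
        (Prod.fst_mem_zpowers hu) (Prod.fst_mem_zpowers hv) h
    · exact h ▸ one_mem _
  · rcases h₂ with h | h
    · exact mem_zpowers_of_mem_zpowers_of_pow_prime_eq_one hq c.2.pow_eq_one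
        (Prod.snd_mem_zpowers hu) (Prod.snd_mem_zpowers hv) h
    · exact h ▸ one_mem _

end El

theorem stmt11 (p q n m : ℕ) (hp : p.Prime) (hq : q.Prime) (hpq : p ≠ q) :
    (∀ (a : El p n) (b : El q m), a ≠ 1 → b ≠ 1 →
      (enhancedPowerGraph (El p n × El q m)).Adj (a, 1) (1, b)) ∧
    (∀ u v : El p n × El q m,
      (enhancedPowerGraph (El p n × El q m)).Adj u v →
      ¬ (powerGraph (El p n × El q m)).Adj u v →
      ((u.1 ≠ 1 ∧ u.2 = 1 ∧ v.1 = 1 ∧ v.2 ≠ 1) ∨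
       (u.1 = 1 ∧ u.2 ≠ 1 ∧ v.1 ≠ 1 ∧ v.2 = 1))) := by
  have hcop := El.coprime_orderOf (n := n) (m := m) ((Nat.coprime_primes hp hq).mpr hpq)
  refine ⟨fun a b ha _ => ⟨fun h => ha (congrArg Prod.fst h), (a, b),
    Prod.mk_one_mem_zpowers (hcop a b), Prod.one_mk_mem_zpowers (hcop a b)⟩, ?_⟩
  rintro u v ⟨hne, c, hu, hv⟩ hnot
  have hvu (h₁ : u.1 ≠ 1 ∨ v.1 = 1) (h₂ : u.2 ≠ 1 ∨ v.2 = 1) : False :=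
    hnot ⟨hne, Or.inr (El.mem_zpowers_of_mem_zpowers hp hq hpq hu hv h₁ h₂)⟩
  have huv (h₁ : v.1 ≠ 1 ∨ u.1 = 1) (h₂ : v.2 ≠ 1 ∨ u.2 = 1) : False :=
    hnot ⟨hne, Or.inl (El.mem_zpowers_of_mem_zpowers hp hq hpq hv hu h₁ h₂)⟩
  tauto
end

section
/- Let p, q be distinct primes, α = (pⁿ−1)/(p−1), β = (q^m−1)/(q−1). The (α+β+2) × (α+β+2) real matrix T₂ (the quotient matrix of the power graph of El(pⁿ) × El(q^m) described below, with blocks indexed by {1} ∪ [α] ∪ ([α]×[β]) ∪ [β]) has pq − p − q as an eigenvalue with multiplicity at least (α−1)(β−1): for each 1 ≤ i ≤ α−1 and 1 ≤ j ≤ β−1, the vector (0, 0_α, vⁱ ⊗ wʲ, 0_β) is an eigenvector with eigenvalue pq − p − q, where vⁱ ∈ R^α has entries 1 at position i, −1 at position α, 0 elsewhere, and wʲ ∈ R^β similarly; these (α−1)(β−1) vectors are linearly independent. -/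
open Polynomial

/-- Index set for the quotient matrix `T₂`: `{1} ⊕ [α] ⊕ ([α]×[β]) ⊕ [β]`. -/
abbrev T2Idx (α β : ℕ) : Type := Unit ⊕ Fin α ⊕ (Fin α × Fin β) ⊕ Fin β

/-- The quotient matrix `T₂` of the power graph of `El(pⁿ) × El(qᵐ)`. -/
noncomputable def T2mat (p q α β : ℕ) : Matrix (T2Idx α β) (T2Idx α β) ℝ :=
  fun r c => match r, c with
  | .inl _, .inl _ => 0
  | .inl _, .inr (.inl _) => (p : ℝ) - 1
  | .inl _, .inr (.inr (.inl _)) => ((p : ℝ) - 1) * ((q : ℝ) - 1)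
  | .inl _, .inr (.inr (.inr _)) => (q : ℝ) - 1
  | .inr (.inl _), .inl _ => 1
  | .inr (.inl i), .inr (.inl i') => if i = i' then (p : ℝ) - 2 else 0
  | .inr (.inl i), .inr (.inr (.inl i'j)) =>
      if i = i'j.1 then ((p : ℝ) - 1) * ((q : ℝ) - 1) else 0
  | .inr (.inl _), .inr (.inr (.inr _)) => 0
  | .inr (.inr (.inl _)), .inl _ => 1
  | .inr (.inr (.inl ij)), .inr (.inl i') => if ij.1 = i' then (p : ℝ) - 1 else 0
  | .inr (.inr (.inl ij)), .inr (.inr (.inl i'j')) =>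
      if ij = i'j' then ((p : ℝ) - 1) * ((q : ℝ) - 1) - 1 else 0
  | .inr (.inr (.inl ij)), .inr (.inr (.inr j')) => if ij.2 = j' then (q : ℝ) - 1 else 0
  | .inr (.inr (.inr _)), .inl _ => 1
  | .inr (.inr (.inr _)), .inr (.inl _) => 0
  | .inr (.inr (.inr j)), .inr (.inr (.inl i'j')) =>
      if j = i'j'.2 then ((p : ℝ) - 1) * ((q : ℝ) - 1) else 0
  | .inr (.inr (.inr j)), .inr (.inr (.inr j')) => if j = j' then (q : ℝ) - 2 else 0

/-- The vector `vⁱ ∈ ℝ^α`: `1` at position `i`, `-1` at the last position, `0` elsewhere. -/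
noncomputable def vVec (α : ℕ) (i : Fin α) : Fin α → ℝ :=
  fun k => if k = i then 1 else if (k : ℕ) = α - 1 then -1 else 0

/-- The vector `(0, 0_α, vⁱ ⊗ wʲ, 0_β)`. -/
noncomputable def zVec (α β : ℕ) (i : Fin α) (j : Fin β) : T2Idx α β → ℝ :=
  fun r => match r with
  | .inr (.inr (.inl kl)) => vVec α i kl.1 * vVec β j kl.2
  | _ => 0

/-!
The vectors `vⁱ` and `wʲ` have coordinate sum zero, so every block of `T₂` that sums over a
whole row or column of the `[α] × [β]` block annihilates `vⁱ ⊗ wʲ`; the diagonal block acts by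
`(p - 1)(q - 1) - 1 = pq - p - q`. Restricted to the non-last coordinates, the vectors
`vⁱ ⊗ wʲ` are the standard basis vectors, hence linearly independent.
-/

section

variable {R ι κ : Type*} [CommSemiring R] [Fintype ι] [Fintype κ]

theorem sum_prod_mul_mul_eq_zero_of_sum_right {w : κ → R} (hw : ∑ l, w l = 0)
    (a v : ι → R) : ∑ kl : ι × κ, a kl.1 * (v kl.1 * w kl.2) = 0 := by
  simp_rw [Fintype.sum_prod_type, ← mul_assoc, ← Finset.mul_sum, hw, mul_zero,
    Finset.sum_const_zero]

theorem sum_prod_mul_mul_eq_zero_of_sum_left {v : ι → R} (hv : ∑ k, v k = 0)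
    (b w : κ → R) : ∑ kl : ι × κ, b kl.2 * (v kl.1 * w kl.2) = 0 := by
  simp_rw [Fintype.sum_prod_type_right, mul_left_comm _ (v _), ← Finset.sum_mul, hv, zero_mul,
    Finset.sum_const_zero]

end

theorem sum_vVec_eq_zero {α : ℕ} (i : Fin α) (hi : (i : ℕ) + 1 < α) : ∑ k, vVec α i k = 0 := by
  have hi' : i ≠ ⟨α - 1, by omega⟩ := Fin.ne_of_val_ne (show (i : ℕ) ≠ α - 1 by omega)
  rw [Fintype.sum_eq_add i _ hi']
  · simp [vVec, hi'.symm]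
  · rintro k ⟨hki, hkl⟩
    simp [vVec, hki, Fin.ext_iff.not.mp hkl]

theorem vVec_apply_of_lt {α : ℕ} (i k : Fin α) (hk : (k : ℕ) + 1 < α) :
    vVec α i k = if k = i then 1 else 0 := by
  simp [vVec, show (k : ℕ) ≠ α - 1 by omega]

theorem T2mat_mulVec_zVec (p q : ℕ) {α β : ℕ} (i : Fin α) (j : Fin β)
    (hi : (i : ℕ) + 1 < α) (hj : (j : ℕ) + 1 < β) :
    (T2mat p q α β).mulVec (zVec α β i j) = ((p : ℝ) * q - p - q) • zVec α β i j := by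
  have hv := sum_vVec_eq_zero i hi
  have hw := sum_vVec_eq_zero j hj
  funext r
  rcases r with _ | i' | kl | j' <;>
    simp only [Matrix.mulVec, dotProduct, Fintype.sum_sum_type, T2mat, zVec, mul_zero,
      Finset.sum_const_zero, zero_add, add_zero, Pi.smul_apply, smul_eq_mul]
  · exact sum_prod_mul_mul_eq_zero_of_sum_right hw (fun _ => _) _
  · exact sum_prod_mul_mul_eq_zero_of_sum_right hw (fun k => if i' = k then _ else 0) _
  · simp only [ite_mul, zero_mul, Finset.sum_ite_eq, Finset.mem_univ, if_true]
    ring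
  · exact sum_prod_mul_mul_eq_zero_of_sum_left hv (fun l => if j' = l then _ else 0) _

theorem linearIndependent_zVec (α β : ℕ) :
    LinearIndependent ℝ
      (fun ij : {i : Fin α // (i : ℕ) + 1 < α} × {j : Fin β // (j : ℕ) + 1 < β} =>
        zVec α β ij.1.1 ij.2.1) := by
  let e : {i : Fin α // (i : ℕ) + 1 < α} × {j : Fin β // (j : ℕ) + 1 < β} → T2Idx α β :=
    fun kl => .inr (.inr (.inl (kl.1.1, kl.2.1)))
  refine LinearIndependent.of_comp (LinearMap.funLeft ℝ ℝ e) ?_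
  suffices h : LinearMap.funLeft ℝ ℝ e ∘
      (fun ij : {i : Fin α // (i : ℕ) + 1 < α} × {j : Fin β // (j : ℕ) + 1 < β} =>
        zVec α β ij.1.1 ij.2.1) = fun ij => Pi.single ij 1 by
    rw [h]
    exact Pi.linearIndependent_single_one _ ℝ
  ext ij kl
  simp only [Function.comp_apply, LinearMap.funLeft_apply, e, zVec,
    vVec_apply_of_lt _ _ kl.1.2, vVec_apply_of_lt _ _ kl.2.2, Pi.single_apply, Prod.ext_iff,
    Subtype.ext_iff, ite_zero_mul_ite_zero, mul_one]

theorem stmt12_general (p q α β : ℕ) :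
    (∀ (i : Fin α) (j : Fin β), (i : ℕ) + 1 < α → (j : ℕ) + 1 < β →
      (T2mat p q α β).mulVec (zVec α β i j)
        = ((p : ℝ) * q - p - q) • zVec α β i j) ∧
    LinearIndependent ℝ
      (fun ij : {i : Fin α // (i : ℕ) + 1 < α} × {j : Fin β // (j : ℕ) + 1 < β} =>
        zVec α β ij.1.1 ij.2.1) :=
  ⟨fun i j hi hj => T2mat_mulVec_zVec p q i j hi hj, linearIndependent_zVec α β⟩

theorem stmt12 (p q n m α β : ℕ) (hp : p.Prime) (hq : q.Prime) (hpq : p ≠ q)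
    (hα : (p - 1) * α = p ^ n - 1) (hβ : (q - 1) * β = q ^ m - 1) :
    (∀ (i : Fin α) (j : Fin β), (i : ℕ) + 1 < α → (j : ℕ) + 1 < β →
      (T2mat p q α β).mulVec (zVec α β i j)
        = ((p : ℝ) * q - p - q) • zVec α β i j) ∧
    LinearIndependent ℝ
      (fun ij : {i : Fin α // (i : ℕ) + 1 < α} × {j : Fin β // (j : ℕ) + 1 < β} =>
        zVec α β ij.1.1 ij.2.1) :=
  stmt12_general p q α β
end
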